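/- Let L_{n,m} be the lollipop graph (n ≥ 3, m ≥ 2) and let k be any positive integer with k ≥ n. Then L_{n,m} has a harmonious coloring with k colors if and only if the graph obtained from the complete graph K_k by deleting all edges among a fixed set of n vertices contains a trail with m vertices (m−1 edges, all distinct) starting at one of those n vertices. Consequently h(L_{n,m}) is the minimum such k. -/

import Mathlib

/-- A coloring `c` is harmonious for `G` if it is a proper vertex coloring and
every unordered pair of colors appears on the endpoints of at most one edge. -/
def IsHarmonious {V α : Type*} (G : SimpleGraph V) (c : V → α) : Prop :=
  (∀ ⦃u v : V⦄, G.Adj u v → c u ≠ c v) ∧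
  ∀ e ∈ G.edgeSet, ∀ e' ∈ G.edgeSet, Sym2.map c e = Sym2.map c e' → e = e'

/-- The harmonious chromatic number: the least `k` such that `G` admits a
harmonious coloring with `k` colors. -/
noncomputable def harmoniousChromaticNumber {V : Type*} [Fintype V] (G : SimpleGraph V) : ℕ :=
  sInf {k | ∃ c : V → Fin k, IsHarmonious G c}


/-- The lollipop graph `L_{n,m}`: a complete graph on the vertices `inl i`,
a path `inl 0, inr 0, inr 1, …, inr (m-2)` with `m` vertices attached at the
clique vertex `inl 0`. -/
def lollipopGraph (n m : ℕ) : SimpleGraph (Fin n ⊕ Fin (m - 1)) :=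
  SimpleGraph.fromRel (fun x y =>
    match x, y with
    | .inl i, .inl j => i ≠ j
    | .inl i, .inr p => i.val = 0 ∧ p.val = 0
    | .inr p, .inr q => q.val = p.val + 1
    | _, _ => False)

/-- The complete graph on `Fin k` with all edges among the first `n`
vertices removed. -/
def completeMinusClique (n k : ℕ) : SimpleGraph (Fin k) where
  Adj x y := x ≠ y ∧ ¬(x.val < n ∧ y.val < n)
  symm := by
    constructor
    intro x y ⟨h1, h2⟩
    exact ⟨h1.symm, fun h => h2 ⟨h.2, h.1⟩⟩
  loopless := by constructor; intro x ⟨h, _⟩; exact h rfl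

/-!
In a harmonious colouring of `L_{n,m}` the clique receives `n` distinct colours, which after
permuting the colours are `0, …, n - 1`. The colours along the path then form a trail in `K_k`
(consecutive colours differ and distinct edges get distinct colour pairs) starting in
`{0, …, n - 1}`, and it never uses an edge inside that set, because such a colour pair is already
taken by a clique edge. Conversely, colouring the clique by `0, …, n - 1`, with the start of such a
trail on the attachment vertex, and the path along the trail, is harmonious. For the minimum, note
that any harmonious colouring uses at least `n` colours on the clique.
-/

open SimpleGraph Function

namespace SimpleGraph.Walk

variable {V : Type*} {G : SimpleGraph V}

def ofSeq (f : ℕ → V) : ∀ L : ℕ, (∀ j < L, G.Adj (f j) (f (j + 1))) → G.Walk (f 0) (f L)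
  | 0, _ => .nil
  | L + 1, h =>
    .cons (h 0 L.succ_pos) (ofSeq (fun j => f (j + 1)) L fun j hj => h (j + 1) (by omega))

theorem edges_ofSeq (f : ℕ → V) (L : ℕ) (h : ∀ j < L, G.Adj (f j) (f (j + 1))) :
    (ofSeq f L h).edges = (List.range L).map fun j => s(f j, f (j + 1)) := by
  induction L generalizing f with
  | zero => rfl
  | succ L ih => simp [ofSeq, ih, List.range_succ_eq_map]

theorem length_ofSeq (f : ℕ → V) (L : ℕ) (h : ∀ j < L, G.Adj (f j) (f (j + 1))) :
    (ofSeq f L h).length = L := by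
  rw [← length_edges, edges_ofSeq, List.length_map, List.length_range]

theorem isTrail_ofSeq {f : ℕ → V} {L : ℕ} (h : ∀ j < L, G.Adj (f j) (f (j + 1)))
    (hinj : Set.InjOn (fun j => s(f j, f (j + 1))) (Set.Iio L)) : (ofSeq f L h).IsTrail := by
  rw [isTrail_def, edges_ofSeq]
  exact List.nodup_range.map_on fun i hi j hj => hinj (by simpa using hi) (by simpa using hj)

theorem IsTrail.injOn_getVert_pair {u v : V} {w : G.Walk u v} (hw : w.IsTrail) :
    Set.InjOn (fun j => s(w.getVert j, w.getVert (j + 1))) (Set.Iio w.length) := by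
  intro i hi j hj (hij : s(_, _) = s(_, _))
  rw [Set.mem_Iio, ← length_edges] at hi hj
  rw [← getElem_edges hi, ← getElem_edges hj] at hij
  exact hw.edges_nodup.getElem_inj_iff.mp hij

end SimpleGraph.Walk

theorem Set.InjOn.sym2_mk_succ {α : Type*} {f : ℕ → α} {L : ℕ} (hf : Set.InjOn f (Set.Iic L)) :
    Set.InjOn (fun j => s(f j, f (j + 1))) (Set.Iio L) := by
  intro i (hi : i < L) j (hj : j < L) hij
  rcases Sym2.eq_iff.mp hij with ⟨h, -⟩ | ⟨h, h'⟩
  · exact hf (show i ≤ L by omega) (show j ≤ L by omega) h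
  · have := hf (show i ≤ L by omega) (show j + 1 ≤ L by omega) h
    have := hf (show i + 1 ≤ L by omega) (show j ≤ L by omega) h'
    omega

section Harmonious

variable {V α : Type*} {G : SimpleGraph V} {c : V → α}

theorem isHarmonious_iff :
    IsHarmonious G c ↔
      (∀ e ∈ G.edgeSet, ¬(e.map c).IsDiag) ∧ Set.InjOn (Sym2.map c) G.edgeSet := by
  refine and_congr_left' ⟨fun h e he => ?_, fun h u v huv => ?_⟩
  · induction e using Sym2.ind with
    | _ u v => simpa using h he
  · simpa using h s(u, v) huv

theorem IsHarmonious.comp_injective {β : Type*} (hc : IsHarmonious G c) {f : α → β}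
    (hf : Injective f) : IsHarmonious G (f ∘ c) :=
  ⟨fun _ _ huv => hf.ne (hc.1 huv), fun e he e' he' h =>
    hc.2 e he e' he' (Sym2.map.injective hf (by simpa only [Sym2.map_map] using h))⟩

theorem IsHarmonious.injective_comp {W : Type*} (hc : IsHarmonious G c) {f : W → V}
    (hf : ∀ a b, a ≠ b → G.Adj (f a) (f b)) : Injective (c ∘ f) :=
  fun a b hab => by_contra fun hne => hc.1 (hf a b hne) hab

end Harmonious

section Lollipop

variable {n m : ℕ}

theorem lollipop_adj_inl_inl (i j : Fin n) :
    (lollipopGraph n m).Adj (.inl i) (.inl j) ↔ i ≠ j := by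
  simp only [lollipopGraph, fromRel_adj, ne_eq, Sum.inl.injEq, eq_comm (a := j), or_self,
    and_self]

theorem IsHarmonious.le_of_lollipop {k : ℕ} {c : Fin n ⊕ Fin (m - 1) → Fin k}
    (hc : IsHarmonious (lollipopGraph n m) c) : n ≤ k :=
  Fin.le_of_injective _ (hc.injective_comp fun a b => (lollipop_adj_inl_inl a b).2)

variable [NeZero n]

/-- Past index `m - 1` the value is junk (`inl 0`). -/
def lollipopStick (n m : ℕ) [NeZero n] : ℕ → Fin n ⊕ Fin (m - 1)
  | 0 => .inl 0
  | j + 1 => if h : j < m - 1 then .inr ⟨j, h⟩ else .inl 0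

theorem lollipopStick_zero : lollipopStick n m 0 = .inl 0 := rfl

theorem lollipopStick_succ {j : ℕ} (h : j < m - 1) : lollipopStick n m (j + 1) = .inr ⟨j, h⟩ :=
  dif_pos h

theorem lollipopStick_injOn : Set.InjOn (lollipopStick n m) (Set.Iic (m - 1)) := by
  rintro (_ | i) hi (_ | j) hj h <;> simp only [Set.mem_Iic] at hi hj
  · rfl
  · simp [lollipopStick_zero, lollipopStick_succ (by omega : j < m - 1)] at h
  · simp [lollipopStick_zero, lollipopStick_succ (by omega : i < m - 1)] at h
  · simpa [lollipopStick_succ (by omega : i < m - 1), lollipopStick_succ (by omega : j < m - 1)]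
      using h

theorem lollipop_adj_lollipopStick {j : ℕ} (hj : j < m - 1) :
    (lollipopGraph n m).Adj (lollipopStick n m j) (lollipopStick n m (j + 1)) := by
  cases j with
  | zero => simp [lollipopStick_zero, lollipopStick_succ hj, lollipopGraph]
  | succ j =>
    simp [lollipopStick_succ hj, lollipopStick_succ (by omega : j < m - 1), lollipopGraph]

theorem lollipop_edgeSet_cases {e : Sym2 (Fin n ⊕ Fin (m - 1))}
    (he : e ∈ (lollipopGraph n m).edgeSet) :
    (∃ d : Sym2 (Fin n), e = d.map Sum.inl) ∨
      ∃ j < m - 1, e = s(lollipopStick n m j, lollipopStick n m (j + 1)) := by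
  induction e using Sym2.ind with | _ x y => ?_
  rw [mem_edgeSet] at he
  rcases x with i | p <;> rcases y with i' | q
  · exact .inl ⟨s(i, i'), rfl⟩
  · simp only [lollipopGraph, fromRel_adj, or_false] at he
    obtain ⟨-, hi, hq⟩ := he
    refine .inr ⟨0, q.pos, ?_⟩
    rw [lollipopStick_zero, lollipopStick_succ q.pos, Fin.ext (b := 0) hi,
      Fin.ext (b := ⟨0, q.pos⟩) hq]
  · simp only [lollipopGraph, fromRel_adj, false_or] at he
    obtain ⟨-, hi, hq⟩ := he
    refine .inr ⟨0, p.pos, ?_⟩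
    rw [lollipopStick_zero, lollipopStick_succ p.pos, Fin.ext (b := 0) hi,
      Fin.ext (b := ⟨0, p.pos⟩) hq, Sym2.eq_swap]
  · simp only [lollipopGraph, fromRel_adj] at he
    obtain ⟨-, h | h⟩ := he
    · refine .inr ⟨p + 1, by omega, ?_⟩
      rw [lollipopStick_succ (by omega), lollipopStick_succ (by omega)]
      simp [Fin.ext_iff, h]
    · refine .inr ⟨q + 1, by omega, ?_⟩
      rw [lollipopStick_succ (by omega), lollipopStick_succ (by omega), Sym2.eq_swap]
      simp [Fin.ext_iff, h]

end Lollipop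

section LollipopColoring

variable {n m k : ℕ} [NeZero n] {c : Fin n ⊕ Fin (m - 1) → Fin k}

local notation "stick" => lollipopStick n m

theorem IsHarmonious.adj_and_injOn_lollipopStick (hk : n ≤ k)
    (hc : IsHarmonious (lollipopGraph n m) c) (hcl : ∀ i, c (.inl i) = Fin.castLE hk i) :
    (∀ j < m - 1, (completeMinusClique n k).Adj (c (stick j)) (c (stick (j + 1)))) ∧
      Set.InjOn (fun j => s(c (stick j), c (stick (j + 1)))) (Set.Iio (m - 1)) := by
  have hedge : ∀ j < m - 1, s(stick j, stick (j + 1)) ∈ (lollipopGraph n m).edgeSet :=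
    fun j hj => lollipop_adj_lollipopStick hj
  refine ⟨fun j hj => ⟨hc.1 (hedge j hj), fun ⟨hx, hy⟩ => ?_⟩, fun i hi j hj hij => ?_⟩
  · -- both colours are clique colours, so the clique edge between them has the same colour pair
    set a : Fin n := ⟨_, hx⟩
    set b : Fin n := ⟨_, hy⟩
    have hca : c (.inl a) = c (stick j) := by rw [hcl]; rfl
    have hcb : c (.inl b) = c (stick (j + 1)) := by rw [hcl]; rfl
    have hab : (lollipopGraph n m).Adj (.inl a) (.inl b) :=
      (lollipop_adj_inl_inl a b).2 fun h => hc.1 (hedge j hj) (by rw [← hca, ← hcb, h])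
    have := hc.2 _ (hedge j hj) s(.inl a, .inl b) hab (by simp [hca, hcb])
    simp [lollipopStick_succ hj] at this
  · exact lollipopStick_injOn.sym2_mk_succ hi hj
      (hc.2 _ (hedge i hi) _ (hedge j hj) (by simpa using hij))

theorem isHarmonious_lollipop_of_lollipopStick (hinj : Injective (c ∘ Sum.inl))
    (hlt : ∀ i, (c (.inl i)).val < n)
    (hadj : ∀ j < m - 1, (completeMinusClique n k).Adj (c (stick j)) (c (stick (j + 1))))
    (hinjOn : Set.InjOn (fun j => s(c (stick j), c (stick (j + 1)))) (Set.Iio (m - 1))) :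
    IsHarmonious (lollipopGraph n m) c := by
  have hstick : ∀ j < m - 1,
      Sym2.map c s(stick j, stick (j + 1)) ∈ (completeMinusClique n k).edgeSet := hadj
  have hclique (d : Sym2 (Fin n)) :
      Sym2.map c (d.map Sum.inl) ∉ (completeMinusClique n k).edgeSet := by
    induction d using Sym2.ind with
    | _ i j => exact fun h => h.2 ⟨hlt i, hlt j⟩
  rw [isHarmonious_iff]
  refine ⟨fun e he => ?_, fun e he e' he' h => ?_⟩
  · rcases lollipop_edgeSet_cases he with ⟨d, rfl⟩ | ⟨j, hj, rfl⟩
    · have hd := (lollipopGraph n m).not_isDiag_of_mem_edgeSet he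
      rwa [Sym2.isDiag_map Sum.inl_injective, ← Sym2.isDiag_map hinj, ← Sym2.map_map] at hd
    · exact (completeMinusClique n k).not_isDiag_of_mem_edgeSet (hstick j hj)
  · rcases lollipop_edgeSet_cases he with ⟨d, rfl⟩ | ⟨i, hi, rfl⟩ <;>
      rcases lollipop_edgeSet_cases he' with ⟨d', rfl⟩ | ⟨j, hj, rfl⟩
    · rw [Sym2.map_map, Sym2.map_map] at h
      rw [Sym2.map.injective hinj h]
    · exact absurd (h ▸ hstick j hj) (hclique d)
    · exact absurd (h ▸ hstick i hi) (hclique d')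
    · rw [hinjOn hi hj (by simpa using h)]

theorem exists_trail_of_isHarmonious_lollipop (hk : n ≤ k)
    (hc : IsHarmonious (lollipopGraph n m) c) :
    ∃ (u v : Fin k) (w : (completeMinusClique n k).Walk u v),
      w.IsTrail ∧ u.val < n ∧ w.length = m - 1 := by
  obtain ⟨σ, hσ⟩ := Equiv.Perm.exists_extending_pair _ _
    (hc.injective_comp fun a b => (lollipop_adj_inl_inl a b).2) (Fin.castLE_injective hk)
  obtain ⟨hadj, hinj⟩ := (hc.comp_injective σ.injective).adj_and_injOn_lollipopStick hk hσ
  refine ⟨_, _, Walk.ofSeq _ _ hadj, Walk.isTrail_ofSeq hadj hinj, ?_, Walk.length_ofSeq _ _ _⟩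
  simp [lollipopStick_zero, show σ (c (.inl 0)) = _ from hσ 0, Nat.pos_of_neZero]

theorem exists_isHarmonious_lollipop_of_trail (hk : n ≤ k) {u v : Fin k}
    {w : (completeMinusClique n k).Walk u v} (hw : w.IsTrail) (hu : u.val < n)
    (hlen : w.length = m - 1) :
    ∃ c : Fin n ⊕ Fin (m - 1) → Fin k, IsHarmonious (lollipopGraph n m) c := by
  -- the clique colour of `inl 0` is the start `u` of the trail
  let c : Fin n ⊕ Fin (m - 1) → Fin k :=
    Sum.elim (fun i => Fin.castLE hk (Equiv.swap 0 ⟨u, hu⟩ i)) fun p => w.getVert (p + 1)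
  have hstick : ∀ j ≤ m - 1, c (lollipopStick n m j) = w.getVert j := by
    rintro (_ | j) hj
    · simp [c, lollipopStick_zero]
    · simp [c, lollipopStick_succ (by omega : j < m - 1)]
  refine ⟨c, isHarmonious_lollipop_of_lollipopStick ((Fin.castLE_injective hk).comp
    (Equiv.injective _)) (fun i => by simp [c]) (fun j hj => ?_) ?_⟩
  · rw [hstick j hj.le, hstick (j + 1) hj]
    exact w.adj_getVert_succ (by omega)
  · refine hlen ▸ hw.injOn_getVert_pair.congr fun j hj => ?_
    simp only [hstick j (by simp at hj; omega), hstick (j + 1) (by simp at hj; omega)]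

theorem exists_isHarmonious_lollipop_iff (hk : n ≤ k) :
    (∃ c : Fin n ⊕ Fin (m - 1) → Fin k, IsHarmonious (lollipopGraph n m) c) ↔
      ∃ (u v : Fin k) (w : (completeMinusClique n k).Walk u v),
        w.IsTrail ∧ u.val < n ∧ w.length = m - 1 :=
  ⟨fun ⟨_, hc⟩ => exists_trail_of_isHarmonious_lollipop hk hc,
    fun ⟨_, _, _, hw, hu, hlen⟩ => exists_isHarmonious_lollipop_of_trail hk hw hu hlen⟩

end LollipopColoring

theorem harmonious_lollipop_general (n m : ℕ) (hn : 3 ≤ n) :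
    (∀ k : ℕ, n ≤ k →
      ((∃ c : (Fin n ⊕ Fin (m - 1)) → Fin k, IsHarmonious (lollipopGraph n m) c) ↔
        (∃ (u v : Fin k) (w : (completeMinusClique n k).Walk u v),
          w.IsTrail ∧ u.val < n ∧ w.length = m - 1))) ∧
    harmoniousChromaticNumber (lollipopGraph n m) =
      sInf {k : ℕ | n ≤ k ∧
        ∃ (u v : Fin k) (w : (completeMinusClique n k).Walk u v),
          w.IsTrail ∧ u.val < n ∧ w.length = m - 1} := by
  have : NeZero n := ⟨by omega⟩
  refine ⟨fun k hk => exists_isHarmonious_lollipop_iff hk, congrArg sInf (Set.ext fun k => ?_)⟩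
  refine ⟨fun ⟨c, hc⟩ => ?_, fun ⟨hk, h⟩ => (exists_isHarmonious_lollipop_iff hk).2 h⟩
  exact ⟨hc.le_of_lollipop, (exists_isHarmonious_lollipop_iff hc.le_of_lollipop).1 ⟨c, hc⟩⟩

theorem harmonious_lollipop (n m : ℕ) (hn : 3 ≤ n) (hm : 2 ≤ m) :
    (∀ k : ℕ, n ≤ k →
      ((∃ c : (Fin n ⊕ Fin (m - 1)) → Fin k, IsHarmonious (lollipopGraph n m) c) ↔
        (∃ (u v : Fin k) (w : (completeMinusClique n k).Walk u v),
          w.IsTrail ∧ u.val < n ∧ w.length = m - 1))) ∧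
    harmoniousChromaticNumber (lollipopGraph n m) =
      sInf {k : ℕ | n ≤ k ∧
        ∃ (u v : Fin k) (w : (completeMinusClique n k).Walk u v),
          w.IsTrail ∧ u.val < n ∧ w.length = m - 1} :=
  harmonious_lollipop_general n m hn
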